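/- For sufficiently small σ > 0, the integral over ℝ² of the square of the positive part of σ - (|x|² - 1)² equals (16π/15)·σ^{5/2}. -/

import Mathlib

/-! The integrand depends on `x` only through `u = ‖x‖²`, and polar coordinates followed by the
substitution `u = r²` turn a planar integral of a function of `‖x‖²` into `π` times a
one-dimensional integral over `u > 0`. In `u` the integrand is the squared bump
`[σ - (u - 1)²]₊²` of half-width `√σ ≤ 1` centred at `1`, so it is supported in `u ≥ 0`;
after translating it to the origin, `∫ (σ - v²)² dv` over `|v| ≤ √σ` is `16/15 · σ^{5/2}`. -/

open MeasureTheory Real Set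

theorem EuclideanSpace.integral_comp_norm_sq_fin_two {E : Type*} [NormedAddCommGroup E]
    [NormedSpace ℝ E] (F : ℝ → E) :
    ∫ x : EuclideanSpace ℝ (Fin 2), F (‖x‖ ^ 2) = π • ∫ u in Ioi (0 : ℝ), F u := by
  have hball : volume.real (Metric.ball (0 : EuclideanSpace ℝ (Fin 2)) 1) = π := by
    simp [measureReal_def, pi_pos.le]
  rw [integral_fun_norm_addHaar volume (fun r => F (r ^ 2)), finrank_euclideanSpace_fin, hball,
    ← integral_comp_rpow_Ioi F two_ne_zero, ← Nat.cast_smul_eq_nsmul ℝ, ← integral_smul,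
    ← integral_smul, ← integral_smul]
  norm_num [smul_smul, mul_comm, mul_left_comm, mul_assoc]

theorem integral_sq_sub_sq_sq (s : ℝ) :
    ∫ v in -s..s, (s ^ 2 - v ^ 2) ^ 2 = 16 / 15 * s ^ 5 := by
  have hderiv : ∀ v, HasDerivAt (fun v => s ^ 4 * v - 2 * s ^ 2 * v ^ 3 / 3 + v ^ 5 / 5)
      ((s ^ 2 - v ^ 2) ^ 2) v := fun v =>
    ((((hasDerivAt_id v).const_mul (s ^ 4)).sub
      (((hasDerivAt_pow 3 v).const_mul (2 * s ^ 2)).div_const 3)).add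
      ((hasDerivAt_pow 5 v).div_const 5)).congr_deriv (by norm_num; ring)
  rw [intervalIntegral.integral_eq_sub_of_hasDerivAt (fun v _ => hderiv v)
    ((by fun_prop : Continuous fun v : ℝ => (s ^ 2 - v ^ 2) ^ 2).intervalIntegrable _ _)]
  ring

theorem integral_sq_posPart_sq_sub_sq {s : ℝ} (hs : 0 ≤ s) :
    ∫ v : ℝ, (max (s ^ 2 - v ^ 2) 0) ^ 2 = 16 / 15 * s ^ 5 := by
  have hvanish : ∀ v ∉ Ioc (-s) s, (max (s ^ 2 - v ^ 2) 0) ^ 2 = 0 := by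
    intro v hv
    rw [mem_Ioc, not_and_or, not_lt, not_le] at hv
    have : s ^ 2 ≤ v ^ 2 := by rcases hv with hv | hv <;> nlinarith
    simp [this]
  have hpos : EqOn (fun v => (max (s ^ 2 - v ^ 2) 0) ^ 2) (fun v => (s ^ 2 - v ^ 2) ^ 2)
      (uIcc (-s) s) := by
    intro v hv
    rw [uIcc_of_le (by linarith), mem_Icc] at hv
    simp only [max_eq_left (show 0 ≤ s ^ 2 - v ^ 2 by nlinarith)]
  rw [← setIntegral_eq_integral_of_forall_compl_eq_zero hvanish,
    ← intervalIntegral.integral_of_le (by linarith), intervalIntegral.integral_congr hpos,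
    integral_sq_sub_sq_sq]

theorem integral_Ioi_sq_posPart_sq_sub_sq_sub {s c : ℝ} (hs : 0 ≤ s) (hsc : s ≤ c) :
    ∫ u in Ioi 0, (max (s ^ 2 - (u - c) ^ 2) 0) ^ 2 = 16 / 15 * s ^ 5 := by
  have hvanish : ∀ u ∉ Ioi 0, (max (s ^ 2 - (u - c) ^ 2) 0) ^ 2 = 0 := by
    intro u hu
    rw [mem_Ioi, not_lt] at hu
    simp [show s ^ 2 ≤ (u - c) ^ 2 by nlinarith]
  rw [setIntegral_eq_integral_of_forall_compl_eq_zero hvanish,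
    integral_sub_right_eq_self (fun v => (max (s ^ 2 - v ^ 2) 0) ^ 2) c,
    integral_sq_posPart_sq_sub_sq hs]

/-- For sufficiently small `σ > 0` (in fact for `0 < σ ≤ 1`), the integral over `ℝ²` of the
square of the positive part of `σ - (|x|² - 1)²` equals `(16π/15) σ^{5/2}`. -/
theorem integral_sq_posPart_eq (σ : ℝ) (hσ : 0 < σ) (hσ' : σ ≤ 1) :
    (∫ x : EuclideanSpace ℝ (Fin 2), (max (σ - (‖x‖ ^ 2 - 1) ^ 2) 0) ^ 2)
      = (16 * Real.pi / 15) * σ ^ ((5 : ℝ) / 2) := by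
  obtain ⟨s, hs, rfl⟩ : ∃ s, 0 ≤ s ∧ s ^ 2 = σ := ⟨√σ, sqrt_nonneg σ, sq_sqrt hσ.le⟩
  have hs1 : s ≤ 1 := by nlinarith
  have hpow : (s ^ 2) ^ ((5 : ℝ) / 2) = s ^ 5 := by
    rw [← rpow_natCast, ← rpow_mul hs]
    norm_num
  rw [EuclideanSpace.integral_comp_norm_sq_fin_two (fun u => (max (s ^ 2 - (u - 1) ^ 2) 0) ^ 2),
    integral_Ioi_sq_posPart_sq_sub_sq_sub hs hs1, hpow, smul_eq_mul]
  ring
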